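/- Let U be a smooth divergence-free vector field on ℝ³ with U ∈ Ḣ¹(ℝ³) ∩ L⁴(ℝ³) solving the stationary Navier–Stokes equations −ΔU + (U·∇)U + ∇P = 0 with pressure P = (−Δ)^{-1} div div(U⊗U) ∈ L²(ℝ³). Then ∫_{ℝ³} |∇⊗U|² dx = 0 and hence U = 0. -/

import Mathlib

noncomputable section

open MeasureTheory ENNReal Set Metric Filter

abbrev E3 := EuclideanSpace ℝ (Fin 3)

/-- Partial derivative in the `j`-th coordinate direction. -/
def pd (j : Fin 3) (f : E3 → ℝ) (x : E3) : ℝ :=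
  fderiv ℝ f x (EuclideanSpace.single j 1)

/-- Euclidean norm of the value of a vector field. -/
def vnorm (U : E3 → Fin 3 → ℝ) (x : E3) : ℝ :=
  Real.sqrt (∑ i, (U x i) ^ 2)

/-- Squared Frobenius norm of the Jacobian matrix `∇⊗U`. -/
def gradSq (U : E3 → Fin 3 → ℝ) (x : E3) : ℝ :=
  ∑ i, ∑ j, (pd j (fun y => U y i) x) ^ 2

/-- Closed annulus `{a ≤ |x| ≤ b}` in `ℝ³`. -/
def annulus (a b : ℝ) : Set E3 := {x | a ≤ ‖x‖ ∧ ‖x‖ ≤ b}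

/-- Distribution function `d_f(α) = |{x : |f(x)| > α}|`. -/
def distFn (f : E3 → ℝ) (α : ℝ) : ℝ≥0∞ := volume {x : E3 | α < |f x|}

/-- Weak Lorentz quasinorm `‖f‖_{L^{r,∞}} = sup_{α>0} α d_f(α)^{1/r}`. -/
def wLorentz (r : ℝ) (f : E3 → ℝ) : ℝ≥0∞ :=
  ⨆ α : Ioi (0 : ℝ), ENNReal.ofReal α.1 * distFn f α.1 ^ (1 / r)

/-- Lorentz norm `‖f‖_{L^{r,q}} = r^{1/q} (∫_0^∞ (α d_f(α)^{1/r})^q dα/α)^{1/q}`, `q < ∞`. -/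
def lorentzNorm (r q : ℝ) (f : E3 → ℝ) : ℝ≥0∞ :=
  ENNReal.ofReal r ^ (1 / q) *
    (∫⁻ α in Ioi (0 : ℝ),
      (ENNReal.ofReal α * distFn f α ^ (1 / r)) ^ q * ENNReal.ofReal α⁻¹) ^ (1 / q)

/-- Homogeneous Morrey norm
`‖f‖_{Ṁ^{p,r}} = sup_{R>0, x₀} R^{3/r-3/p} (∫_{B(x₀,R)} |f|^p)^{1/p}`. -/
def morreyNorm (p r : ℝ) (f : E3 → ℝ) : ℝ≥0∞ :=
  ⨆ (x₀ : E3) (R : Ioi (0 : ℝ)),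
    ENNReal.ofReal (R.1 ^ (3 / r - 3 / p)) *
      (∫⁻ x in ball x₀ R.1, ENNReal.ofReal (|f x| ^ p)) ^ (1 / p)

/-- Test function: smooth and compactly supported. -/
def IsTest (φ : E3 → ℝ) : Prop := ContDiff ℝ (⊤ : ℕ∞) φ ∧ HasCompactSupport φ

/-- Weak (distributional) solution of the stationary Navier–Stokes equations
`-ΔU + (U·∇)U + ∇P = 0`, `div U = 0`, with `U ∈ L²loc`, `P ∈ L¹loc`. -/
structure IsWeakNS (U : E3 → Fin 3 → ℝ) (P : E3 → ℝ) : Prop where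
  u_loc : LocallyIntegrable (fun x => vnorm U x ^ 2) volume
  p_loc : LocallyIntegrable P volume
  divfree : ∀ φ : E3 → ℝ, IsTest φ → ∫ x, ∑ j, U x j * pd j φ x = 0
  momentum : ∀ i : Fin 3, ∀ φ : E3 → ℝ, IsTest φ →
    ∫ x, (U x i * (∑ j, pd j (pd j φ) x)
      + (∑ j, U x i * U x j * pd j φ x) + P x * pd i φ x) = 0

/-- Heat kernel on `ℝ³`. -/
def heat (t : ℝ) (x : E3) : ℝ :=
  (4 * Real.pi * t) ^ (-(3 : ℝ) / 2) * Real.exp (-‖x‖ ^ 2 / (4 * t))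

/-- Besov norm `‖U‖_{Ḃ^{-1}_{∞,∞}} = sup_{t>0} t^{1/2} ‖h_t ∗ U‖_{L^∞}`. -/
def besovNorm (U : E3 → Fin 3 → ℝ) : ℝ≥0∞ :=
  ⨆ t : Ioi (0 : ℝ), ENNReal.ofReal (Real.sqrt t.1) *
    eLpNorm (fun x : E3 => (fun i => ∫ y, heat t.1 (x - y) * U y i : Fin 3 → ℝ)) ⊤ volume


set_option maxHeartbeats 1600000
open Topology

/-! ### Auxiliary lemmas for `energy_identity_trivial_solution` -/

private lemma pd_add' {f g : E3 → ℝ} {x : E3} (hf : DifferentiableAt ℝ f x)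
    (hg : DifferentiableAt ℝ g x) (j : Fin 3) :
    pd j (fun y => f y + g y) x = pd j f x + pd j g x := by
  simp [pd, fderiv_fun_add hf hg]

private lemma pd_sub' {f g : E3 → ℝ} {x : E3} (hf : DifferentiableAt ℝ f x)
    (hg : DifferentiableAt ℝ g x) (j : Fin 3) :
    pd j (fun y => f y - g y) x = pd j f x - pd j g x := by
  simp [pd, fderiv_fun_sub hf hg]

private lemma pd_mul' {f g : E3 → ℝ} {x : E3} (hf : DifferentiableAt ℝ f x)
    (hg : DifferentiableAt ℝ g x) (j : Fin 3) :
    pd j (fun y => f y * g y) x = pd j f x * g x + f x * pd j g x := by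
  simp [pd, fderiv_fun_mul hf hg]; ring

private lemma pd_const_mul' {f : E3 → ℝ} {x : E3} (hf : DifferentiableAt ℝ f x)
    (c : ℝ) (j : Fin 3) :
    pd j (fun y => c * f y) x = c * pd j f x := by
  simp [pd, fderiv_const_mul hf c]

private lemma pd_sum' {f : Fin 3 → E3 → ℝ} {x : E3}
    (hf : ∀ i, DifferentiableAt ℝ (f i) x) (j : Fin 3) :
    pd j (fun y => ∑ i, f i y) x = ∑ i, pd j (f i) x := by
  simp [pd, fderiv_fun_sum (fun i _ => hf i)]

private lemma contDiff_pd {f : E3 → ℝ} (hf : ContDiff ℝ (⊤ : ℕ∞) f) (j : Fin 3) :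
    ContDiff ℝ (⊤ : ℕ∞) (pd j f) :=
  (hf.fderiv_right (m := (⊤ : ℕ∞)) le_rfl).clm_apply contDiff_const

/-! #### Smooth cutoff -/

private def cut (R : ℝ) (x : E3) : ℝ := Real.smoothTransition (2 - ‖x‖^2 / R^2)

open scoped ContDiff in
private lemma contDiff_cut (R : ℝ) : ContDiff ℝ ∞ (cut R) :=
  (Real.smoothTransition.contDiff (n := (⊤ : ℕ∞))).comp
    ((contDiff_const (c := (2:ℝ))).sub
      (((contDiff_norm_sq (𝕜 := ℝ) (n := ((⊤:ℕ∞) : WithTop ℕ∞)))).div_const _))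

private lemma cut_eq_one {R : ℝ} (hR : 0 < R) {x : E3} (h : ‖x‖ ≤ R) : cut R x = 1 := by
  apply Real.smoothTransition.one_of_one_le
  have h2 : ‖x‖^2 / R^2 ≤ 1 := by
    rw [div_le_one (by positivity)]
    exact pow_le_pow_left₀ (norm_nonneg x) h 2
  linarith

private lemma cut_eq_zero {R : ℝ} (hR : 0 < R) {x : E3} (h : 2 * R^2 ≤ ‖x‖^2) :
    cut R x = 0 := by
  apply Real.smoothTransition.zero_of_nonpos
  have h2 : (2:ℝ) ≤ ‖x‖^2 / R^2 := by
    rw [le_div_iff₀ (by positivity)]; linarith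
  linarith

private lemma cut_nonneg (R : ℝ) (x : E3) : 0 ≤ cut R x := Real.smoothTransition.nonneg _
private lemma cut_le_one (R : ℝ) (x : E3) : cut R x ≤ 1 := Real.smoothTransition.le_one _

private lemma hasCompactSupport_cut {R : ℝ} (hR : 0 < R) : HasCompactSupport (cut R) := by
  apply HasCompactSupport.intro (isCompact_closedBall (0:E3) (2*R))
  intro x hx
  simp only [mem_closedBall, dist_zero_right, not_le] at hx
  apply cut_eq_zero hR
  nlinarith [norm_nonneg x]

private lemma deriv_st_zero {t : ℝ} (h : t < 0 ∨ 1 < t) :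
    deriv Real.smoothTransition t = 0 := by
  rcases h with h | h
  · have : Real.smoothTransition =ᶠ[nhds t] (fun _ => 0) := by
      filter_upwards [Iio_mem_nhds h] with s hs
      exact Real.smoothTransition.zero_of_nonpos (le_of_lt hs)
    rw [this.deriv_eq, deriv_const]
  · have : Real.smoothTransition =ᶠ[nhds t] (fun _ => 1) := by
      filter_upwards [Ioi_mem_nhds h] with s hs
      exact Real.smoothTransition.one_of_one_le (le_of_lt hs)
    rw [this.deriv_eq, deriv_const]

private lemma cont_deriv_st : Continuous (deriv Real.smoothTransition) :=
  (Real.smoothTransition.contDiff (n := 2)).continuous_deriv (by norm_num)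

private lemma hasFDerivAt_cut (R : ℝ) (x : E3) :
    HasFDerivAt (cut R)
      ((deriv Real.smoothTransition (2 - ‖x‖^2 / R^2) * (-1/R^2)) • (2 • (innerSL ℝ x))) x := by
  have h1 : HasFDerivAt (fun x : E3 => ‖x‖^2) (2 • (innerSL ℝ x)) x :=
    (hasStrictFDerivAt_norm_sq x).hasFDerivAt
  have h2 : HasFDerivAt (fun x : E3 => 2 - ‖x‖^2 / R^2)
      ((-1/R^2) • (2 • (innerSL ℝ x))) x := by
    have h4 : HasFDerivAt (fun x : E3 => ‖x‖^2 / R^2) ((R^2)⁻¹ • (2 • (innerSL ℝ x))) x := by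
      simpa [div_eq_inv_mul] using h1.const_mul (R^2)⁻¹
    have := (hasFDerivAt_const (2:ℝ) x).sub h4
    refine this.congr_fderiv ?_
    ext v; simp; ring
  have h3 : HasDerivAt Real.smoothTransition
      (deriv Real.smoothTransition (2 - ‖x‖^2 / R^2)) (2 - ‖x‖^2 / R^2) :=
    (((Real.smoothTransition.contDiff (n := 1)).differentiable (by norm_num)) _).hasDerivAt
  have := h3.comp_hasFDerivAt x h2
  refine this.congr_fderiv ?_
  ext v
  simp [cut]
  try ring

private lemma pd_cut_eq (R : ℝ) (x : E3) (j : Fin 3) :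
    pd j (cut R) x = deriv Real.smoothTransition (2 - ‖x‖^2 / R^2) * (-1/R^2)
      * (2 * inner ℝ x (EuclideanSpace.single j (1:ℝ))) := by
  rw [pd, (hasFDerivAt_cut R x).fderiv]
  simp
  try ring

private lemma pd_cut_zero_inner {R : ℝ} (hR : 0 < R) {x : E3} (h : ‖x‖ < R) (j : Fin 3) :
    pd j (cut R) x = 0 := by
  rw [pd_cut_eq]
  have : ‖x‖^2 / R^2 < 1 := by
    rw [div_lt_one (by positivity)]
    exact pow_lt_pow_left₀ h (norm_nonneg x) (by norm_num)
  rw [deriv_st_zero (Or.inr (by linarith))]; ring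

private lemma pd_cut_zero_outer {R : ℝ} (hR : 0 < R) {x : E3} (h : 2 * R^2 < ‖x‖^2)
    (j : Fin 3) : pd j (cut R) x = 0 := by
  rw [pd_cut_eq]
  have : (2:ℝ) < ‖x‖^2 / R^2 := by rw [lt_div_iff₀ (by positivity)]; linarith
  rw [deriv_st_zero (Or.inl (by linarith))]; ring

private lemma pd_cut_bound {M R : ℝ} (hM : ∀ t, |deriv Real.smoothTransition t| ≤ M)
    (hR : 0 < R) (x : E3) (j : Fin 3) :
    |pd j (cut R) x| ≤ M * (2 * ‖x‖ / R^2) := by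
  rw [pd_cut_eq]
  have h1 : |inner ℝ x (EuclideanSpace.single j (1:ℝ))| ≤ ‖x‖ := by
    calc |inner ℝ x (EuclideanSpace.single j (1:ℝ))|
        ≤ ‖x‖ * ‖EuclideanSpace.single j (1:ℝ)‖ := abs_real_inner_le_norm _ _
      _ = ‖x‖ := by rw [EuclideanSpace.norm_single]; simp
  have h0 : (0:ℝ) ≤ M := le_trans (abs_nonneg _) (hM 0)
  calc |_ * (-1/R^2) * (2 * inner ℝ x (EuclideanSpace.single j (1:ℝ)))|
      = |deriv Real.smoothTransition (2 - ‖x‖^2/R^2)| * (1/R^2)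
          * (2 * |inner ℝ x (EuclideanSpace.single j (1:ℝ))|) := by
        rw [abs_mul, abs_mul]
        congr 2
        · rw [abs_div, abs_neg, abs_one]; congr 1; exact abs_of_nonneg (by positivity)
        · rw [abs_mul]; congr 1; norm_num
    _ ≤ M * (1/R^2) * (2 * ‖x‖) := by
        apply mul_le_mul (mul_le_mul (hM _) le_rfl (by positivity) h0) (by linarith)
          (by positivity)
        positivity
    _ = M * (2 * ‖x‖ / R^2) := by ring

private lemma exists_M : ∃ M : ℝ, 0 ≤ M ∧ ∀ t, |deriv Real.smoothTransition t| ≤ M := by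
  have hs : HasCompactSupport (deriv Real.smoothTransition) := by
    apply HasCompactSupport.intro (isCompact_Icc (a := (0:ℝ)) (b := 1))
    intro t ht
    simp only [Set.mem_Icc, not_and_or, not_le] at ht
    exact deriv_st_zero (by tauto)
  obtain ⟨C, hC⟩ := hs.exists_bound_of_continuous cont_deriv_st
  exact ⟨C, le_trans (norm_nonneg _) (hC 0), fun t => by simpa using hC t⟩

/-! #### Young-type elementary inequalities -/

private lemma young1 (u a r : ℝ) :
    u*a*r ≤ a^2/2 + u^4/4 + r^4/4 := by
  nlinarith [sq_nonneg (u*r - a), sq_nonneg (u^2 - r^2)]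

private lemma young2 (s uj r : ℝ) (hs : 0 ≤ s) (hsq : uj^2 ≤ s) :
    s*uj*r ≤ s^2 + r^4/2 := by
  nlinarith [mul_nonneg hs (sq_nonneg (uj - r)), sq_nonneg (s - r^2),
    mul_le_mul_of_nonneg_left hsq hs]

private lemma young3 (p uj r : ℝ) :
    p*uj*r ≤ p^2/2 + uj^4/4 + r^4/4 := by
  nlinarith [sq_nonneg (uj*r - p), sq_nonneg (uj^2 - r^2)]

private lemma aux_bound (u0 u1 u2 a0 a1 a2 uj p r s : ℝ)
    (h0 : 0 ≤ u0) (h1 : 0 ≤ u1) (h2 : 0 ≤ u2)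
    (hp : 0 ≤ p) (hr : 0 ≤ r) (hujnn : 0 ≤ uj)
    (hs : s = u0^2+u1^2+u2^2) (hujsq : uj^2 ≤ s) :
    (u0*a0 + u1*a1 + u2*a2 + (s + p)*uj) * r
      ≤ a0^2 + a1^2 + a2^2 + 2*s^2 + p^2 + 2*r^4 := by
  have hsnn : 0 ≤ s := by nlinarith
  have k1 := young1 u0 a0 r
  have k2 := young1 u1 a1 r
  have k3 := young1 u2 a2 r
  have k4 := young2 s uj r hsnn hujsq
  have k6 := young3 p uj r
  have k6' : uj^4 ≤ s^2 := by nlinarith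
  have k7 : u0^4 + u1^4 + u2^4 ≤ s^2 := by
    subst hs
    nlinarith [mul_nonneg (sq_nonneg u0) (sq_nonneg u1),
      mul_nonneg (sq_nonneg u0) (sq_nonneg u2), mul_nonneg (sq_nonneg u1) (sq_nonneg u2)]
  have expand : (u0*a0 + u1*a1 + u2*a2 + (s + p)*uj) * r
      = u0*a0*r + u1*a1*r + u2*a2*r + s*uj*r + p*uj*r := by ring
  rw [expand]
  linarith [sq_nonneg a0, sq_nonneg a1, sq_nonneg a2, sq_nonneg s, sq_nonneg p,
    sq_nonneg (r^2)]

/-! #### The auxiliary vector field `F` with `div F = |∇⊗U|²` -/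

private def sqU (U : E3 → Fin 3 → ℝ) (x : E3) : ℝ := ∑ i, U x i * U x i

private def FF (U : E3 → Fin 3 → ℝ) (P : E3 → ℝ) (j : Fin 3) (x : E3) : ℝ :=
  (1/2) * pd j (sqU U) x - ((1/2) * sqU U x + P x) * U x j

private def QQ (U : E3 → Fin 3 → ℝ) (j : Fin 3) (x : E3) : ℝ :=
  (∑ k, pd k (pd k fun y => U y j) x) - ∑ k, U x k * pd k (fun y => U y j) x

private def GG (U : E3 → Fin 3 → ℝ) (P : E3 → ℝ) (j : Fin 3) (x : E3) : ℝ :=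
  (∑ i, (pd j (fun y => U y i) x ^ 2 + U x i * pd j (pd j fun y => U y i) x))
    - (∑ i, U x i * pd j (fun y => U y i) x) * U x j - QQ U j x * U x j
    - ((1/2) * sqU U x + P x) * pd j (fun y => U y j) x

variable {U : E3 → Fin 3 → ℝ} {P : E3 → ℝ}

private lemma hUd (hU : ∀ i, ContDiff ℝ (⊤ : ℕ∞) fun x => U x i) (i : Fin 3) :
    Differentiable ℝ (fun x => U x i) := (hU i).differentiable (by simp)

private lemma hsqc (hU : ∀ i, ContDiff ℝ (⊤ : ℕ∞) fun x => U x i) : ContDiff ℝ (⊤ : ℕ∞) (sqU U) := by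
  have : ∀ i : Fin 3, ContDiff ℝ (⊤ : ℕ∞) (fun x => U x i * U x i) := fun i => (hU i).mul (hU i)
  exact ContDiff.sum fun i _ => this i

private lemma pdA (hU : ∀ i, ContDiff ℝ (⊤ : ℕ∞) fun x => U x i) (j : Fin 3) (x : E3) :
    pd j (sqU U) x = ∑ i, 2 * (U x i * pd j (fun y => U y i) x) := by
  have h1 : ∀ i : Fin 3, DifferentiableAt ℝ (fun y => U y i * U y i) x :=
    fun i => ((hUd hU i) x).mul ((hUd hU i) x)
  calc pd j (sqU U) x = ∑ i, pd j (fun y => U y i * U y i) x := pd_sum' (fun i => h1 i) j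
    _ = ∑ i, 2 * (U x i * pd j (fun y => U y i) x) := Finset.sum_congr rfl fun i _ => by
        rw [pd_mul' ((hUd hU i) x) ((hUd hU i) x) j]; ring

private lemma pdB (hU : ∀ i, ContDiff ℝ (⊤ : ℕ∞) fun x => U x i) (j : Fin 3) (x : E3) :
    pd j (pd j (sqU U)) x
      = ∑ i, 2 * (pd j (fun y => U y i) x ^ 2 + U x i * pd j (pd j fun y => U y i) x) := by
  have hfun : pd j (sqU U) = fun y => ∑ i, 2 * (U y i * pd j (fun z => U z i) y) :=
    funext fun y => pdA hU j y
  rw [hfun]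
  have hdiffpd : ∀ i : Fin 3, Differentiable ℝ (pd j (fun y => U y i)) :=
    fun i => (contDiff_pd (hU i) j).differentiable (by simp)
  have h1 : ∀ i : Fin 3, DifferentiableAt ℝ (fun y => U y i * pd j (fun z => U z i) y) x :=
    fun i => ((hUd hU i) x).mul ((hdiffpd i) x)
  calc pd j (fun y => ∑ i, 2 * (U y i * pd j (fun z => U z i) y)) x
      = ∑ i, pd j (fun y => 2 * (U y i * pd j (fun z => U z i) y)) x :=
        pd_sum' (fun i => ((h1 i).const_mul 2)) j
    _ = ∑ i, 2 * (pd j (fun y => U y i) x ^ 2 + U x i * pd j (pd j fun y => U y i) x) := by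
        refine Finset.sum_congr rfl fun i _ => ?_
        rw [pd_const_mul' (h1 i) 2 j, pd_mul' ((hUd hU i) x) ((hdiffpd i) x) j]
        ring

private lemma pdC (hU : ∀ i, ContDiff ℝ (⊤ : ℕ∞) fun x => U x i) (hP : Differentiable ℝ P)
    (j : Fin 3) (x : E3) :
    pd j (fun y => ((1/2) * sqU U y + P y) * U y j) x
      = ((1/2) * pd j (sqU U) x + pd j P x) * U x j
        + ((1/2) * sqU U x + P x) * pd j (fun y => U y j) x := by
  have hsqd : Differentiable ℝ (sqU U) := (hsqc hU).differentiable (by simp)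
  have h1 : DifferentiableAt ℝ (fun y => (1/2) * sqU U y + P y) x :=
    ((hsqd x).const_mul _).add (hP x)
  rw [pd_mul' h1 ((hUd hU j) x) j, pd_add' ((hsqd x).const_mul _) (hP x) j,
    pd_const_mul' (hsqd x) _ j]

private lemma pdF (hU : ∀ i, ContDiff ℝ (⊤ : ℕ∞) fun x => U x i) (hP : Differentiable ℝ P)
    (hNS : ∀ (i : Fin 3) (x : E3),
      -(∑ j, pd j (pd j fun y => U y i) x)
        + (∑ j, U x j * pd j (fun y => U y i) x) + pd i P x = 0)
    (j : Fin 3) (x : E3) :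
    pd j (FF U P j) x = GG U P j x := by
  have hsqd : Differentiable ℝ (sqU U) := (hsqc hU).differentiable (by simp)
  have hpdsq : Differentiable ℝ (pd j (sqU U)) := (contDiff_pd (hsqc hU) j).differentiable (by simp)
  have h1 : DifferentiableAt ℝ (fun y => (1/2) * pd j (sqU U) y) x := (hpdsq x).const_mul _
  have h2 : DifferentiableAt ℝ (fun y => ((1/2) * sqU U y + P y) * U y j) x :=
    (((hsqd x).const_mul _).add (hP x)).mul ((hUd hU j) x)
  have step : pd j (FF U P j) x
      = (1/2) * pd j (pd j (sqU U)) x - pd j (fun y => ((1/2) * sqU U y + P y) * U y j) x := by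
    have : pd j (FF U P j) x
        = pd j (fun y => (1/2) * pd j (sqU U) y) x
          - pd j (fun y => ((1/2) * sqU U y + P y) * U y j) x := pd_sub' h1 h2 j
    rw [this, pd_const_mul' (hpdsq x) _ j]
  rw [step, pdC hU hP j x, pdB hU j x, pdA hU j x]
  have hPd : pd j P x = QQ U j x := by
    have h := hNS j x
    simp only [QQ]
    linarith
  rw [hPd]
  simp only [GG, Fin.sum_univ_three]
  ring

private lemma halg (hdiv : ∀ x : E3, ∑ j, pd j (fun y => U y j) x = 0) (x : E3) :
    ∑ j, GG U P j x = gradSq U x := by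
  have hd := hdiv x
  simp only [Fin.sum_univ_three] at hd
  simp only [GG, QQ, gradSq, Fin.sum_univ_three]
  linear_combination (-(1 / 2 * sqU U x + P x)) * hd


/-- energy identity — a smooth divergence-free solution in
`Ḣ¹ ∩ L⁴` with pressure in `L²` has zero Dirichlet energy, hence vanishes. -/
theorem energy_identity_trivial_solution (U : E3 → Fin 3 → ℝ) (P : E3 → ℝ)
    (hU : ∀ i, ContDiff ℝ (⊤ : ℕ∞) fun x => U x i) (hP : Differentiable ℝ P)
    (hdiv : ∀ x : E3, ∑ j, pd j (fun y => U y j) x = 0)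
    (hNS : ∀ (i : Fin 3) (x : E3),
      -(∑ j, pd j (pd j fun y => U y i) x)
        + (∑ j, U x j * pd j (fun y => U y i) x) + pd i P x = 0)
    (hH1 : Integrable (fun x => gradSq U x) volume)
    (hL4 : Integrable (fun x => vnorm U x ^ 4) volume)
    (hPL2 : Integrable (fun x => P x ^ 2) volume) :
    (∫ x, gradSq U x) = 0 ∧ ∀ x : E3, U x = 0 := by
  classical
  have hUd' : ∀ i, Differentiable ℝ (fun x => U x i) := fun i => (hU i).differentiable (by simp)
  have cU : ∀ i, Continuous fun x => U x i := fun i => (hUd' i).continuous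
  have cpd : ∀ (i j : Fin 3), Continuous (pd j (fun y => U y i)) :=
    fun i j => (contDiff_pd (hU i) j).continuous
  have cpd2 : ∀ (i k : Fin 3), Continuous (pd k (pd k (fun y => U y i))) :=
    fun i k => (contDiff_pd (contDiff_pd (hU i) k) k).continuous
  have csq : Continuous (sqU U) := (hsqc hU).continuous
  have cpdsq : ∀ j, Continuous (pd j (sqU U)) := fun j => (contDiff_pd (hsqc hU) j).continuous
  have cP : Continuous P := hP.continuous
  have cQ : ∀ j, Continuous (QQ U j) := fun j =>
    (continuous_finset_sum _ fun k _ => cpd2 j k).sub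
      (continuous_finset_sum _ fun k _ => (cU k).mul (cpd j k))
  have cG : ∀ j, Continuous (GG U P j) := by
    intro j
    refine Continuous.sub (Continuous.sub (Continuous.sub ?_ ?_) ?_) ?_
    · exact continuous_finset_sum _ fun i _ => ((cpd i j).pow 2).add ((cU i).mul (cpd2 i j))
    · exact (continuous_finset_sum _ fun i _ => (cU i).mul (cpd i j)).mul (cU j)
    · exact (cQ j).mul (cU j)
    · exact ((continuous_const.mul csq).add cP).mul (cpd j j)
  have cF : ∀ j, Continuous (FF U P j) := fun j =>
    (continuous_const.mul (cpdsq j)).sub (((continuous_const.mul csq).add cP).mul (cU j))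
  have cgrad : Continuous (gradSq U) :=
    continuous_finset_sum _ fun i _ => continuous_finset_sum _ fun j _ => (cpd i j).pow 2
  have hgnn : ∀ x, 0 ≤ gradSq U x := fun x =>
    Finset.sum_nonneg fun i _ => Finset.sum_nonneg fun j _ => sq_nonneg _
  have hsqnn : ∀ x, 0 ≤ sqU U x := fun x =>
    Finset.sum_nonneg fun i _ => mul_self_nonneg _
  have hFdiff : ∀ j, Differentiable ℝ (FF U P j) := fun j =>
    (((contDiff_pd (hsqc hU) j).differentiable (by simp)).const_mul _).sub
      (((((hsqc hU).differentiable (by simp)).const_mul _).add hP).mul (hUd' j))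
  obtain ⟨M, hM0, hM⟩ := exists_M
  -- Key integration-by-parts identity for each cutoff radius
  have key : ∀ n : ℕ, ∫ x, cut ((n:ℝ)+1) x * gradSq U x
      = - ∫ x, ∑ j, pd j (cut ((n:ℝ)+1)) x * FF U P j x := by
    intro n
    set R : ℝ := (n:ℝ)+1 with hRdef
    have hR0 : (0:ℝ) < R := by positivity
    have ccut : Continuous (cut R) := (contDiff_cut R).continuous
    have hsupp : HasCompactSupport (cut R) := hasCompactSupport_cut hR0
    have cpdcut : ∀ j, Continuous (pd j (cut R)) := by
      intro j
      have e : pd j (cut R) = fun x =>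
          deriv Real.smoothTransition (2 - ‖x‖^2 / R^2) * (-1/R^2)
            * (2 * inner ℝ x (EuclideanSpace.single j (1:ℝ))) := funext fun x => pd_cut_eq R x j
      rw [e]
      exact ((cont_deriv_st.comp
        (continuous_const.sub ((continuous_norm.pow 2).div_const _))).mul
          continuous_const).mul (continuous_const.mul (continuous_id.inner continuous_const))
    have hsupp_pd : ∀ j, HasCompactSupport (pd j (cut R)) := by
      intro j
      apply HasCompactSupport.intro (isCompact_closedBall (0:E3) (2*R))
      intro x hx
      simp only [mem_closedBall, dist_zero_right, not_le] at hx
      exact pd_cut_zero_outer hR0 (by nlinarith [norm_nonneg x]) j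
    have I1 : ∀ j, Integrable (fun x => cut R x * GG U P j x) := fun j =>
      (ccut.mul (cG j)).integrable_of_hasCompactSupport hsupp.mul_right
    have I2 : ∀ j, Integrable (fun x => pd j (cut R) x * FF U P j x) := fun j =>
      ((cpdcut j).mul (cF j)).integrable_of_hasCompactSupport (hsupp_pd j).mul_right
    have I3 : ∀ j, Integrable (fun x => cut R x * FF U P j x) := fun j =>
      (ccut.mul (cF j)).integrable_of_hasCompactSupport hsupp.mul_right
    have I1' : ∀ j, Integrable (fun x => cut R x * pd j (FF U P j) x) := by
      intro j
      have e : (fun x => cut R x * pd j (FF U P j) x) = fun x => cut R x * GG U P j x :=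
        funext fun x => by rw [pdF hU hP hNS j x]
      rw [e]; exact I1 j
    have ibp : ∀ j, ∫ x, cut R x * pd j (FF U P j) x
        = - ∫ x, pd j (cut R) x * FF U P j x := by
      intro j
      exact integral_mul_fderiv_eq_neg_fderiv_mul_of_integrable (I2 j) (I1' j) (I3 j)
        (fun x _ => (contDiff_cut R).differentiable (by simp) x) (fun x _ => hFdiff j x)
    calc ∫ x, cut R x * gradSq U x = ∫ x, ∑ j, cut R x * GG U P j x := by
          congr 1; funext x; rw [← halg hdiv x, Finset.mul_sum]
      _ = ∑ j, ∫ x, cut R x * GG U P j x := integral_finset_sum _ fun j _ => I1 j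
      _ = ∑ j, ∫ x, cut R x * pd j (FF U P j) x := by
          refine Finset.sum_congr rfl fun j _ => ?_
          congr 1; funext x; rw [pdF hU hP hNS j x]
      _ = ∑ j, - ∫ x, pd j (cut R) x * FF U P j x := Finset.sum_congr rfl fun j _ => ibp j
      _ = - ∑ j, ∫ x, pd j (cut R) x * FF U P j x := by rw [Finset.sum_neg_distrib]
      _ = - ∫ x, ∑ j, pd j (cut R) x * FF U P j x := by
          rw [← integral_finset_sum _ fun j _ => I2 j]
  -- First limit : cutoff integrals of |∇U|² converge to the full integral
  have L1 : Tendsto (fun n : ℕ => ∫ x, cut ((n:ℝ)+1) x * gradSq U x) atTop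
      (𝓝 (∫ x, gradSq U x)) := by
    apply tendsto_integral_of_dominated_convergence (fun x => gradSq U x)
      (fun n => (((contDiff_cut _).continuous).mul cgrad).aestronglyMeasurable) hH1
    · intro n
      filter_upwards with x
      have h1 : |cut ((n:ℝ)+1) x| ≤ 1 :=
        abs_le.mpr ⟨by linarith [cut_nonneg ((n:ℝ)+1) x], cut_le_one _ x⟩
      calc ‖cut ((n:ℝ)+1) x * gradSq U x‖ = |cut ((n:ℝ)+1) x| * |gradSq U x| := abs_mul _ _
        _ ≤ 1 * |gradSq U x| := mul_le_mul_of_nonneg_right h1 (abs_nonneg _)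
        _ = gradSq U x := by rw [one_mul, abs_of_nonneg (hgnn x)]
    · filter_upwards with x
      obtain ⟨N, hN⟩ := exists_nat_gt ‖x‖
      refine Tendsto.congr' ?_ (tendsto_const_nhds (x := gradSq U x))
      filter_upwards [eventually_ge_atTop N] with n hn
      have hxn : ‖x‖ ≤ (n:ℝ)+1 := by
        have h2 : (N:ℝ) ≤ (n:ℝ) := Nat.cast_le.mpr hn
        linarith
      rw [Pi.mul_apply, cut_eq_one (by positivity) hxn, one_mul]
  -- Dominating function for the boundary terms
  set D : E3 → ℝ := fun x => (4*M)*(gradSq U x + 6*(sqU U x)^2 + 3*(P x)^2)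
      + (384*M)*(1+‖x‖)^(-4:ℝ) with hDdef
  have hsq4 : ∀ x, (sqU U x)^2 = vnorm U x ^ 4 := by
    intro x
    have h1 : sqU U x = ∑ i, U x i ^ 2 := Finset.sum_congr rfl fun i _ => (sq (U x i)).symm
    have h2 : (0:ℝ) ≤ ∑ i, U x i ^ 2 := Finset.sum_nonneg fun i _ => sq_nonneg _
    rw [h1, vnorm, show (4:ℕ) = 2*2 from rfl, pow_mul, Real.sq_sqrt h2]
  have hIsq : Integrable (fun x => (sqU U x)^2) := by
    have e : (fun x => (sqU U x)^2) = fun x => vnorm U x ^ 4 := funext hsq4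
    rw [e]; exact hL4
  have hIpow : Integrable (fun x : E3 => (1+‖x‖)^(-4:ℝ)) := by
    apply integrable_one_add_norm (μ := (volume : Measure E3))
    simp [finrank_euclideanSpace_fin]
    norm_num
  have hDint : Integrable D := by
    rw [hDdef]
    exact (((hH1.add (hIsq.const_mul 6)).add (hPL2.const_mul 3)).const_mul (4*M)).add
      (hIpow.const_mul _)
  have hDnn : ∀ x, 0 ≤ D x := by
    intro x
    have h1 : (0:ℝ) ≤ (1+‖x‖)^(-4:ℝ) := Real.rpow_nonneg (by positivity) _
    have h2 := sq_nonneg (sqU U x); have h3 := sq_nonneg (P x); have h4 := hgnn x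
    rw [hDdef]
    have : (0:ℝ) ≤ gradSq U x + 6*(sqU U x)^2 + 3*(P x)^2 := by linarith
    positivity
  -- The uniform domination of the boundary integrand
  have hbound : ∀ (n:ℕ) (x : E3), ‖∑ j, pd j (cut ((n:ℝ)+1)) x * FF U P j x‖ ≤ D x := by
    intro n x
    set R : ℝ := (n:ℝ)+1 with hRdef
    have hR0 : (0:ℝ) < R := by positivity
    have hR1 : (1:ℝ) ≤ R := by rw [hRdef]; have := Nat.cast_nonneg (α := ℝ) n; linarith
    rcases lt_or_ge ‖x‖ R with hlt | hge
    · simp only [pd_cut_zero_inner hR0 hlt, zero_mul, Finset.sum_const_zero, norm_zero]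
      exact hDnn x
    rcases lt_or_ge (2*R^2) (‖x‖^2) with houter | hmid
    · simp only [pd_cut_zero_outer hR0 houter, zero_mul, Finset.sum_const_zero, norm_zero]
      exact hDnn x
    have hx1 : (1:ℝ) ≤ ‖x‖ := le_trans hR1 hge
    have hxpos : (0:ℝ) < ‖x‖ := lt_of_lt_of_le one_pos hx1
    have hrpos : (0:ℝ) ≤ ‖x‖⁻¹ := inv_nonneg.2 (norm_nonneg x)
    have hpdb : ∀ j, |pd j (cut R) x| ≤ 4*M/‖x‖ := by
      intro j
      refine le_trans (pd_cut_bound hM hR0 x j) ?_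
      rw [show M * (2*‖x‖/R^2) = (2*M*‖x‖)/R^2 from by ring,
        div_le_div_iff₀ (by positivity) hxpos]
      nlinarith
    have haux : ∀ j, |FF U P j x| * ‖x‖⁻¹
        ≤ (∑ i, pd j (fun y => U y i) x ^ 2) + 2*(sqU U x)^2 + (P x)^2 + 2*(‖x‖⁻¹)^4 := by
      intro j
      have hFexp : FF U P j x
          = (∑ i, U x i * pd j (fun y => U y i) x) - ((1/2) * sqU U x + P x) * U x j := by
        simp only [FF]
        rw [pdA hU j x, Finset.mul_sum]
        congr 1
        exact Finset.sum_congr rfl fun i _ => by ring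
      have htri : |FF U P j x|
          ≤ (∑ i, |U x i| * |pd j (fun y => U y i) x|) + (sqU U x + |P x|) * |U x j| := by
        rw [hFexp, sub_eq_add_neg]
        refine le_trans (abs_add_le _ _) (add_le_add ?_ ?_)
        · exact le_trans (Finset.abs_sum_le_sum_abs _ _)
            (Finset.sum_le_sum fun i _ => le_of_eq (abs_mul _ _))
        · rw [abs_neg, abs_mul]
          refine mul_le_mul_of_nonneg_right ?_ (abs_nonneg _)
          refine le_trans (abs_add_le _ _) ?_
          rw [abs_mul]
          have : |(1:ℝ)/2| * |sqU U x| ≤ sqU U x := by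
            rw [abs_of_nonneg (hsqnn x)]
            rw [show |(1:ℝ)/2| = 1/2 from abs_of_nonneg (by norm_num)]
            linarith [hsqnn x]
          linarith
      have hs' : sqU U x = |U x 0|^2 + |U x 1|^2 + |U x 2|^2 := by
        simp only [sqU, Fin.sum_univ_three, sq_abs]
        ring
      have hujsq : |U x j|^2 ≤ sqU U x := by
        rw [sq_abs, pow_two]
        exact Finset.single_le_sum (f := fun i => U x i * U x i)
          (fun i _ => mul_self_nonneg _) (Finset.mem_univ j)
      have hab := aux_bound |U x 0| |U x 1| |U x 2|
        |pd j (fun y => U y 0) x| |pd j (fun y => U y 1) x| |pd j (fun y => U y 2) x|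
        |U x j| |P x| ‖x‖⁻¹ (sqU U x)
        (abs_nonneg _) (abs_nonneg _) (abs_nonneg _) (abs_nonneg _) hrpos (abs_nonneg _)
        hs' hujsq
      have hmul := mul_le_mul_of_nonneg_right htri hrpos
      simp only [Fin.sum_univ_three] at hmul hab ⊢
      simp only [sq_abs] at hab
      linarith
    have hr4 : (‖x‖⁻¹)^4 ≤ 16*(1+‖x‖)^(-4:ℝ) := by
      have h2s : 1 + ‖x‖ ≤ 2*‖x‖ := by linarith
      have hpow : (1+‖x‖)^(4:ℕ) ≤ (2*‖x‖)^(4:ℕ) := pow_le_pow_left₀ (by positivity) h2s 4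
      have e1 : (‖x‖⁻¹)^4 = 1/‖x‖^4 := by rw [inv_pow, one_div]
      have e2 : (1+‖x‖)^(-4:ℝ) = 1/(1+‖x‖)^(4:ℕ) := by
        rw [show (-4:ℝ) = -((4:ℕ):ℝ) from by norm_num, Real.rpow_neg (by positivity),
          Real.rpow_natCast, one_div]
      rw [e1, e2, show (16:ℝ)*(1/(1+‖x‖)^(4:ℕ)) = 16/(1+‖x‖)^(4:ℕ) from by ring,
        div_le_div_iff₀ (by positivity) (by positivity)]
      nlinarith
    calc ‖∑ j, pd j (cut R) x * FF U P j x‖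
        ≤ ∑ j, ‖pd j (cut R) x * FF U P j x‖ := norm_sum_le _ _
      _ = ∑ j, |pd j (cut R) x| * |FF U P j x| := by
          refine Finset.sum_congr rfl fun j _ => ?_
          rw [Real.norm_eq_abs, abs_mul]
      _ ≤ ∑ j, (4*M/‖x‖) * |FF U P j x| :=
          Finset.sum_le_sum fun j _ => mul_le_mul_of_nonneg_right (hpdb j) (abs_nonneg _)
      _ = (4*M) * ∑ j, |FF U P j x| * ‖x‖⁻¹ := by
          rw [Finset.mul_sum]
          refine Finset.sum_congr rfl fun j _ => ?_
          field_simp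
      _ ≤ (4*M) * ∑ j, ((∑ i, pd j (fun y => U y i) x ^ 2)
            + 2*(sqU U x)^2 + (P x)^2 + 2*(‖x‖⁻¹)^4) := by
          refine mul_le_mul_of_nonneg_left (Finset.sum_le_sum fun j _ => haux j) ?_
          linarith
      _ = (4*M) * (gradSq U x + 6*(sqU U x)^2 + 3*(P x)^2 + 6*(‖x‖⁻¹)^4) := by
          simp only [gradSq, Fin.sum_univ_three]
          ring
      _ ≤ D x := by
          rw [hDdef]
          have h24 : (24*M)*((‖x‖⁻¹)^4) ≤ (24*M)*(16*(1+‖x‖)^(-4:ℝ)) :=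
            mul_le_mul_of_nonneg_left hr4 (by linarith)
          nlinarith [h24]
  -- Second limit : boundary terms vanish
  have L2 : Tendsto (fun n : ℕ => ∫ x, ∑ j, pd j (cut ((n:ℝ)+1)) x * FF U P j x) atTop
      (𝓝 0) := by
    have h0 : (0:ℝ) = ∫ (_x : E3), (0:ℝ) := by simp
    rw [h0]
    apply tendsto_integral_of_dominated_convergence D
      (fun n => (continuous_finset_sum _ fun j _ => ?_).aestronglyMeasurable) hDint
      (fun n => Filter.Eventually.of_forall (hbound n))
    · filter_upwards with x
      obtain ⟨N, hN⟩ := exists_nat_gt ‖x‖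
      refine Tendsto.congr' ?_ (tendsto_const_nhds (x := (0:ℝ)))
      filter_upwards [eventually_ge_atTop N] with n hn
      have hxn : ‖x‖ < (n:ℝ)+1 := by
        have h2 : (N:ℝ) ≤ (n:ℝ) := Nat.cast_le.mpr hn
        linarith
      simp only [pd_cut_zero_inner (show (0:ℝ) < (n:ℝ)+1 by positivity) hxn, zero_mul,
        Finset.sum_const_zero]
    · -- continuity of each summand (for measurability)
      have cpdcut : Continuous (pd j (cut ((n:ℝ)+1))) := by
        have e : pd j (cut ((n:ℝ)+1)) = fun x =>
            deriv Real.smoothTransition (2 - ‖x‖^2 / ((n:ℝ)+1)^2) * (-1/((n:ℝ)+1)^2)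
              * (2 * inner ℝ x (EuclideanSpace.single j (1:ℝ))) :=
          funext fun x => pd_cut_eq _ x j
        rw [e]
        exact ((cont_deriv_st.comp
          (continuous_const.sub ((continuous_norm.pow 2).div_const _))).mul
            continuous_const).mul (continuous_const.mul (continuous_id.inner continuous_const))
      exact cpdcut.mul (cF j)
  -- Conclude the energy identity
  have L1' : Tendsto (fun n : ℕ => ∫ x, cut ((n:ℝ)+1) x * gradSq U x) atTop (𝓝 0) := by
    have e : (fun n : ℕ => ∫ x, cut ((n:ℝ)+1) x * gradSq U x)
        = fun n : ℕ => - ∫ x, ∑ j, pd j (cut ((n:ℝ)+1)) x * FF U P j x := funext key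
    rw [e]
    simpa using L2.neg
  have hI0 : ∫ x, gradSq U x = 0 := tendsto_nhds_unique L1 L1'
  refine ⟨hI0, ?_⟩
  -- From zero energy to vanishing gradient
  have hae : (fun x => gradSq U x) =ᵐ[volume] 0 :=
    (integral_eq_zero_iff_of_nonneg_ae (Filter.Eventually.of_forall hgnn) hH1).mp hI0
  have hgrad0 : ∀ x, gradSq U x = 0 := by
    have := (cgrad.ae_eq_iff_eq volume continuous_const).mp hae
    intro x; exact congrFun this x
  have hpd0 : ∀ (i j : Fin 3) (x : E3), pd j (fun y => U y i) x = 0 := by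
    intro i j x
    have h := hgrad0 x
    simp only [gradSq] at h
    have h1 := (Finset.sum_eq_zero_iff_of_nonneg
      (fun i _ => Finset.sum_nonneg fun j _ => sq_nonneg _)).mp h i (Finset.mem_univ i)
    have h2 := (Finset.sum_eq_zero_iff_of_nonneg (fun j _ => sq_nonneg _)).mp h1 j
      (Finset.mem_univ j)
    exact (pow_eq_zero_iff (by norm_num : (2:ℕ) ≠ 0)).mp h2
  have hfd0 : ∀ (i : Fin 3) (x : E3), fderiv ℝ (fun y => U y i) x = 0 := by
    intro i x
    refine ContinuousLinearMap.coe_injective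
      (Module.Basis.ext (EuclideanSpace.basisFun (Fin 3) ℝ).toBasis fun j => ?_)
    have hb : (EuclideanSpace.basisFun (Fin 3) ℝ).toBasis j = EuclideanSpace.single j 1 := by
      rw [OrthonormalBasis.coe_toBasis, EuclideanSpace.basisFun_apply]
    rw [hb]
    simpa [pd] using hpd0 i j x
  have hconst : ∀ (i : Fin 3) (x : E3), U x i = U 0 i := fun i x =>
    is_const_of_fderiv_eq_zero (hUd' i) (hfd0 i) x 0
  have hvnorm_const : ∀ x, vnorm U x = vnorm U 0 := by
    intro x
    simp only [vnorm]
    congr 1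
    exact Finset.sum_congr rfl fun i _ => by rw [hconst i x]
  have hvol : (volume : Measure E3) Set.univ = ⊤ :=
    MeasureTheory.measure_univ_of_isAddLeftInvariant (volume : Measure E3)
  have hv0 : vnorm U 0 ^ 4 = 0 := by
    have hIc : Integrable (fun _ : E3 => vnorm U 0 ^ 4) := by
      have e : (fun _ : E3 => vnorm U 0 ^ 4) = fun x => vnorm U x ^ 4 :=
        funext fun x => by rw [hvnorm_const x]
      rw [e]; exact hL4
    rcases integrable_const_iff.mp hIc with h | h
    · exact h
    · exact absurd (measure_lt_top (volume : Measure E3) univ) (by rw [hvol]; exact lt_irrefl _)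
  have hsum0 : ∑ i, U 0 i ^ 2 = 0 := by
    have h1 : vnorm U 0 = 0 := by
      have := pow_eq_zero_iff (n := 4) (by norm_num) |>.mp hv0
      exact this
    have h2 : (0:ℝ) ≤ ∑ i, U 0 i ^ 2 := Finset.sum_nonneg fun i _ => sq_nonneg _
    have := Real.sqrt_eq_zero h2 |>.mp h1
    exact this
  intro x
  funext i
  rw [hconst i x]
  have := (Finset.sum_eq_zero_iff_of_nonneg (fun i _ => sq_nonneg (U 0 i))).mp hsum0 i
    (Finset.mem_univ i)
  exact (pow_eq_zero_iff (by norm_num : (2:ℕ) ≠ 0)).mp this
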